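/- arXiv:1803.00374 — 2 statements merged into one kernel-verified Lean document; each statement's English description precedes it below -/
import Mathlib

section
/- Let Σ = !![σ, υ; υ, γ] be a real symmetric positive definite 2×2 matrix, S = !![1, 0; −υ/σ, 1], H a 2×2 complex matrix, and H̃ = H · S⁻¹, and assume H̃₁₁ ≠ 0. Define the unconditional Granger-causality value GC = log( Re((H Σ H*)₁₁) / (σ·|H̃₁₁|²) ). Then GC = log( 1 + (γ − υ²/σ)·|H̃₁₂|² / (σ·|H̃₁₁|²) ), and GC ≥ 0. -/
open Matrix

/-!
Normalizing by `S` diagonalizes the noise covariance: `S Σ Sᵀ = diag(σ, γ - υ²/σ)`, so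
`h = H̃ diag(σ, γ - υ²/σ) H̃*` and `h₁₁ = σ |H̃₁₁|² + (γ - υ²/σ) |H̃₁₂|²`. The ratio inside the
logarithm is therefore `1 + (γ - υ²/σ)|H̃₁₂|² / (σ|H̃₁₁|²)`, which is at least `1` because the
Schur complement `γ - υ²/σ = det Σ / σ` is positive.
-/

lemma inv_lowerUnitriangular {R : Type*} [CommRing R] (a : R) :
    (!![1, 0; a, 1] : Matrix (Fin 2) (Fin 2) R)⁻¹ = !![1, 0; -a, 1] :=
  inv_eq_left_inv (by simp [one_fin_two])

lemma mul_lowerUnitriangular_apply_zero {R : Type*} [CommRing R]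
    (H : Matrix (Fin 2) (Fin 2) R) (c : R) (i : Fin 2) :
    (H * !![1, 0; c, 1]) i 0 = H i 0 + H i 1 * c := by
  simp [mul_apply, Fin.sum_univ_two]

lemma mul_lowerUnitriangular_apply_one {R : Type*} [CommRing R]
    (H : Matrix (Fin 2) (Fin 2) R) (c : R) (i : Fin 2) :
    (H * !![1, 0; c, 1]) i 1 = H i 1 := by
  simp [mul_apply, Fin.sum_univ_two]

lemma map_ofReal_lowerUnitriangular (a : ℝ) :
    (!![1, 0; a, 1] : Matrix (Fin 2) (Fin 2) ℝ).map Complex.ofReal = !![1, 0; (a : ℂ), 1] := by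
  ext i j
  fin_cases i <;> fin_cases j <;> simp

/-- Completing the square in the Hermitian form `h Σ h*` of a row `h = (a, b)`. -/
lemma re_mul_cov_mul_conjTranspose_apply_self {σ : ℝ} (hσ : σ ≠ 0) (υ γ : ℝ)
    (H : Matrix (Fin 2) (Fin 2) ℂ) (i : Fin 2) :
    ((H * (!![σ, υ; υ, γ] : Matrix (Fin 2) (Fin 2) ℝ).map Complex.ofReal * Hᴴ) i i).re =
      σ * ‖H i 0 + H i 1 * ((υ / σ : ℝ) : ℂ)‖ ^ 2 + (γ - υ ^ 2 / σ) * ‖H i 1‖ ^ 2 := by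
  simp only [mul_apply, Fin.sum_univ_two, conjTranspose_apply, map_apply, of_apply,
    cons_val', cons_val_zero, cons_val_one, cons_val_fin_one, empty_val']
  simp only [← Complex.normSq_eq_norm_sq, Complex.normSq_apply, Complex.add_re, Complex.add_im,
    Complex.mul_re, Complex.mul_im, Complex.ofReal_re, Complex.ofReal_im, Complex.star_def,
    Complex.conj_re, Complex.conj_im]
  field_simp
  ring

lemma schurComplement_pos {σ υ γ : ℝ} (hσ : 0 < σ) (hdet : 0 < σ * γ - υ ^ 2) :
    0 < γ - υ ^ 2 / σ := by
  rw [sub_pos, div_lt_iff₀ hσ]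
  linarith

theorem unconditional_gc_formula_and_nonneg_general
    (σ υ γ : ℝ) (hσ : 0 < σ) (hdet : 0 < σ * γ - υ ^ 2)
    (H : Matrix (Fin 2) (Fin 2) ℂ) :
    let Cov : Matrix (Fin 2) (Fin 2) ℝ := !![σ, υ; υ, γ]
    let S : Matrix (Fin 2) (Fin 2) ℝ := !![1, 0; -υ/σ, 1]
    let Ht : Matrix (Fin 2) (Fin 2) ℂ := H * (S.map (Complex.ofReal))⁻¹
    Ht 0 0 ≠ 0 →
    let GC : ℝ := Real.log (((H * Cov.map (Complex.ofReal) * Hᴴ) 0 0).re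
      / (σ * ‖Ht 0 0‖ ^ 2))
    GC = Real.log (1 + (γ - υ ^ 2 / σ) * ‖Ht 0 1‖ ^ 2
        / (σ * ‖Ht 0 0‖ ^ 2)) ∧
    0 ≤ GC := by
  intro Cov S Ht hHt GC
  have hHt_eq : Ht = H * !![1, 0; ((υ / σ : ℝ) : ℂ), 1] := by
    simp only [Ht, S, map_ofReal_lowerUnitriangular, inv_lowerUnitriangular, neg_div,
      Complex.ofReal_neg, neg_neg]
  have hspec : ((H * Cov.map Complex.ofReal * Hᴴ) 0 0).re =
      σ * ‖Ht 0 0‖ ^ 2 + (γ - υ ^ 2 / σ) * ‖Ht 0 1‖ ^ 2 := by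
    rw [hHt_eq, mul_lowerUnitriangular_apply_zero, mul_lowerUnitriangular_apply_one]
    exact re_mul_cov_mul_conjTranspose_apply_self hσ.ne' υ γ H 0
  have hden : 0 < σ * ‖Ht 0 0‖ ^ 2 := by positivity
  have hratio : ((H * Cov.map Complex.ofReal * Hᴴ) 0 0).re / (σ * ‖Ht 0 0‖ ^ 2) =
      1 + (γ - υ ^ 2 / σ) * ‖Ht 0 1‖ ^ 2 / (σ * ‖Ht 0 0‖ ^ 2) := by
    rw [hspec, add_div, div_self hden.ne']
  have hGC : GC = Real.log (1 + (γ - υ ^ 2 / σ) * ‖Ht 0 1‖ ^ 2 / (σ * ‖Ht 0 0‖ ^ 2)) :=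
    congrArg Real.log hratio
  refine ⟨hGC, hGC ▸ Real.log_nonneg (le_add_of_nonneg_right ?_)⟩
  have := (schurComplement_pos hσ hdet).le
  positivity

/-- The unconditional Granger-causality value
`GC = log( Re((H Σ H*)₁₁) / (σ|H̃₁₁|²) )` equals
`log( 1 + (γ - υ²/σ)|H̃₁₂|² / (σ|H̃₁₁|²) )` and is nonnegative. -/
theorem unconditional_gc_formula_and_nonneg
    (σ υ γ : ℝ) (hσ : 0 < σ) (hγ : 0 < γ) (hdet : 0 < σ * γ - υ ^ 2)
    (H : Matrix (Fin 2) (Fin 2) ℂ) :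
    let Cov : Matrix (Fin 2) (Fin 2) ℝ := !![σ, υ; υ, γ]
    let S : Matrix (Fin 2) (Fin 2) ℝ := !![1, 0; -υ/σ, 1]
    let Ht : Matrix (Fin 2) (Fin 2) ℂ := H * (S.map (Complex.ofReal))⁻¹
    Ht 0 0 ≠ 0 →
    let GC : ℝ := Real.log (((H * Cov.map (Complex.ofReal) * Hᴴ) 0 0).re
      / (σ * ‖Ht 0 0‖ ^ 2))
    GC = Real.log (1 + (γ - υ ^ 2 / σ) * ‖Ht 0 1‖ ^ 2
        / (σ * ‖Ht 0 0‖ ^ 2)) ∧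
    0 ≤ GC :=
  unconditional_gc_formula_and_nonneg_general σ υ γ hσ hdet H
end

section
/- Let A = !![1/2, 1/2; 0, 0] and Σ = I₂ (2×2 real matrices). Then R₀ = !![5/3, 0; 0, 1] is the unique 2×2 real matrix satisfying the discrete Lyapunov equation R₀ = A · R₀ · Aᵀ + Σ (uniqueness holds since the eigenvalues of A are 0 and 1/2, so its spectral radius is less than one), and for every k ≥ 1 the lag-k autocovariance matrix R_k = A^k · R₀ is singular, i.e. det(A^k · R₀) = 0. -/
open Matrix

/-!
Since `A² = A / 2`, the powers `A ^ (n + 1) = 2⁻ⁿ • A` tend to zero. The difference `D` of two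
solutions of the Lyapunov equation satisfies `D = A D Aᵀ`, hence `D = Aⁿ D (Aⁿ)ᵀ → 0`, so `D = 0`.
Singularity of every `A ^ k R₀` is inherited from `det A = 0`.
-/

open Filter Topology

theorem tendsto_pow_atTop_nhds_zero_of_mul_self_eq_smul {E : Type*} [Ring E] [Algebra ℝ E]
    [TopologicalSpace E] [ContinuousSMul ℝ E] {A : E} {c : ℝ}
    (hc₀ : 0 ≤ c) (hc₁ : c < 1) (hA : A * A = c • A) :
    Tendsto (fun k ↦ A ^ k) atTop (𝓝 0) := by
  have hpow (k : ℕ) : A ^ (k + 1) = c ^ k • A := by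
    induction k with
    | zero => simp
    | succ k ih => rw [pow_succ, ih, smul_mul_assoc, hA, smul_smul, pow_succ]
  rw [← tendsto_add_atTop_iff_nat 1]
  simp_rw [hpow]
  simpa using (tendsto_pow_atTop_nhds_zero_of_lt_one hc₀ hc₁).smul_const A

section Lyapunov

variable {n 𝕜 : Type*} [Fintype n] [DecidableEq n] [CommRing 𝕜]

theorem Matrix.eq_pow_mul_mul_transpose_pow_of_eq_mul_mul_transpose {A D : Matrix n n 𝕜}
    (hD : D = A * D * Aᵀ) (k : ℕ) : D = A ^ k * D * (A ^ k)ᵀ := by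
  induction k with
  | zero => simp
  | succ k ih =>
    calc D = A * D * Aᵀ := hD
      _ = A * (A ^ k * D * (A ^ k)ᵀ) * Aᵀ := congrArg (A * · * Aᵀ) ih
      _ = A ^ (k + 1) * D * (A ^ (k + 1))ᵀ := by
        simp only [pow_succ', transpose_mul, mul_assoc]

variable [TopologicalSpace 𝕜] [IsTopologicalRing 𝕜] [T2Space 𝕜] in
theorem Matrix.eq_of_lyapunov_of_tendsto_pow {A S R R' : Matrix n n 𝕜}
    (hA : Tendsto (fun k ↦ A ^ k) atTop (𝓝 0))
    (hR : R = A * R * Aᵀ + S) (hR' : R' = A * R' * Aᵀ + S) : R = R' := by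
  have hD : R - R' = A * (R - R') * Aᵀ := by
    rw [mul_sub, sub_mul]
    nth_rewrite 1 [hR, hR']
    abel
  have hlim : Tendsto (fun k ↦ A ^ k * (R - R') * (A ^ k)ᵀ) atTop (𝓝 0) := by
    have hAt : Tendsto (fun k ↦ (A ^ k)ᵀ) atTop (𝓝 0) :=
      (continuous_id.matrix_transpose.tendsto' 0 0 transpose_zero).comp hA
    simpa using (hA.mul_const (R - R')).mul hAt
  simp_rw [← eq_pow_mul_mul_transpose_pow_of_eq_mul_mul_transpose hD] at hlim
  exact sub_eq_zero.mp (tendsto_nhds_unique tendsto_const_nhds hlim)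

end Lyapunov

theorem Matrix.det_pow_mul_eq_zero {n R : Type*} [Fintype n] [DecidableEq n] [CommRing R]
    {A : Matrix n n R} (hA : A.det = 0) {k : ℕ} (hk : k ≠ 0) (M : Matrix n n R) :
    (A ^ k * M).det = 0 := by
  rw [det_mul, det_pow, hA, zero_pow hk, zero_mul]

/-- For the VAR(1) with `A = !![1/2, 1/2; 0, 0]` and `Σ = I₂`, the matrix
`R₀ = !![5/3, 0; 0, 1]` is the unique solution of the discrete Lyapunov equation
`R₀ = A R₀ Aᵀ + Σ` (the eigenvalues of `A` are `0` and `1/2`), and every lag-`k`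
autocovariance `R_k = A^k R₀`, `k ≥ 1`, is singular: `det (A^k R₀) = 0`. -/
theorem var1_pathological_example_half :
    let A : Matrix (Fin 2) (Fin 2) ℝ := !![1/2, 1/2; 0, 0]
    let R₀ : Matrix (Fin 2) (Fin 2) ℝ := !![5/3, 0; 0, 1]
    R₀ = A * R₀ * Aᵀ + 1 ∧
    (∀ R : Matrix (Fin 2) (Fin 2) ℝ, R = A * R * Aᵀ + 1 → R = R₀) ∧
    (∀ k : ℕ, 1 ≤ k → (A ^ k * R₀).det = 0) := by
  intro A R₀
  have hsol : R₀ = A * R₀ * Aᵀ + 1 := by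
    ext i j
    fin_cases i <;> fin_cases j <;>
      norm_num [A, R₀, mul_apply, Fin.sum_univ_two, one_apply, vecMul, dotProduct]
  have hA_sq : A * A = (1/2 : ℝ) • A := by
    ext i j
    fin_cases i <;> fin_cases j <;> norm_num [A, mul_apply, Fin.sum_univ_two]
  have hA_pow := tendsto_pow_atTop_nhds_zero_of_mul_self_eq_smul (by norm_num) (by norm_num) hA_sq
  have hA_det : A.det = 0 := by simp [A, det_fin_two_of]
  exact ⟨hsol, fun R hR ↦ eq_of_lyapunov_of_tendsto_pow hA_pow hR hsol,
    fun k hk ↦ det_pow_mul_eq_zero hA_det (by omega) R₀⟩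
end
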